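/- arXiv:0711.1905 — 5 statements merged into one kernel-verified Lean document; each statement's English description precedes it below -/
import Mathlib

section
/- Let X = ℝ with the standard metric, and define S_0(x) = 0 for x ≤ 0, S_0(x) = -2x for x > 0, and S_1(x) = -2x for x ≤ 0, S_1(x) = 0 for x > 0. Then for any x_0 ≠ 0, the sequence x_n defined by x_{n+1} = S_{w(n)}(x_n) with the alternating strategy w = 010101⋯ satisfies |x_n| = 2^{n-1}|x_1| for n ≥ 1 whenever x_1 ≠ 0; in particular the trajectory is unbounded. -/
/-- with S₀, S₁ the given piecewise maps on ℝ and the alternating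
strategy w = 0101⋯, the trajectory satisfies |xₙ| = 2^{n-1}|x₁| for n ≥ 1
(when x₁ ≠ 0), hence is unbounded. -/
theorem alternating_trajectory_unbounded (S : Fin 2 → ℝ → ℝ)
    (hS0 : ∀ x : ℝ, S 0 x = if x ≤ 0 then 0 else -2 * x)
    (hS1 : ∀ x : ℝ, S 1 x = if x ≤ 0 then -2 * x else 0)
    (x : ℕ → ℝ) (hx0 : x 0 ≠ 0)
    (hx : ∀ n, x (n + 1) = if n % 2 = 0 then S 0 (x n) else S 1 (x n))
    (hx1 : x 1 ≠ 0) :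
    (∀ n, 1 ≤ n → |x n| = 2 ^ (n - 1) * |x 1|) ∧ ¬ ∃ C : ℝ, ∀ n, |x n| ≤ C := by
  have hx1neg : x 1 < 0 := by
    have h := hx 0
    simp only [Nat.zero_mod, if_pos rfl, if_true, hS0] at h
    norm_num at h
    by_cases h0 : x 0 ≤ 0
    · rw [if_pos h0] at h; exact absurd h hx1
    · rw [if_neg h0] at h
      push_neg at h0
      rw [h]; nlinarith
  have key : ∀ n, 1 ≤ n → (if n % 2 = 1 then x n < 0 else 0 < x n) ∧
      |x n| = 2 ^ (n - 1) * |x 1| := by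
    intro n hn
    induction n with
    | zero => omega
    | succ m ih =>
      rcases Nat.eq_or_lt_of_le hn with h1 | h1
      · simp [← h1, hx1neg]
      · have hm : 1 ≤ m := by omega
        obtain ⟨hsign, habs⟩ := ih hm
        have hstep : x (m + 1) = -2 * x m ∧
            (if (m + 1) % 2 = 1 then x (m + 1) < 0 else 0 < x (m + 1)) := by
          rcases Nat.even_or_odd m with he | ho
          · have hm2 : m % 2 = 0 := Nat.even_iff.mp he
            have hxm : 0 < x m := by simpa [hm2] using hsign
            have h := hx m
            rw [if_pos hm2, hS0, if_neg (by linarith)] at h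
            have hm12 : (m + 1) % 2 = 1 := by omega
            refine ⟨h, ?_⟩
            rw [if_pos hm12, h]; linarith
          · have hm2 : m % 2 = 1 := Nat.odd_iff.mp ho
            have hxm : x m < 0 := by simpa [hm2] using hsign
            have h := hx m
            rw [if_neg (by omega), hS1, if_pos (le_of_lt hxm)] at h
            have hm12 : (m + 1) % 2 ≠ 1 := by omega
            refine ⟨h, ?_⟩
            rw [if_neg hm12, h]; linarith
        refine ⟨hstep.2, ?_⟩
        rw [hstep.1, abs_mul, habs]
        have : |(-2 : ℝ)| = 2 := by norm_num
        rw [this]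
        have : m + 1 - 1 = (m - 1) + 1 := by omega
        rw [this, pow_succ]
        ring
  refine ⟨fun n hn => (key n hn).2, ?_⟩
  rintro ⟨C, hC⟩
  have hx1pos : 0 < |x 1| := abs_pos.mpr hx1
  obtain ⟨n, hn⟩ := pow_unbounded_of_one_lt (C / |x 1|) (by norm_num : (1:ℝ) < 2)
  have h := (key (n + 1) (by omega)).2
  simp only [Nat.add_sub_cancel] at h
  have := hC (n + 1)
  rw [h] at this
  have : 2 ^ n ≤ C / |x 1| := by
    rw [le_div_iff₀ hx1pos]; linarith
  linarith
end

section
/- (Hutchinson) Let X be a complete metric space and S_0,…,S_{N-1} : X → X strict contractions with common factor γ ∈ (0,1). Then the Hutchinson–Barnsley operator F̄(A) = closure(S_0(A) ∪ ⋯ ∪ S_{N-1}(A)) on the space of nonempty closed bounded subsets of X has a unique fixed point K, and K is compact. -/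
/-!
Each `Sⱼ` shrinks Hausdorff distances by the factor `γ`, and the Hausdorff distance of two unions
is at most the supremum of the distances of the pieces; so `A ↦ closure (⋃ j, Sⱼ '' A)` is a
`γ`-contraction of the complete space of closed sets. Nonempty compact sets form a closed subspace
that the operator preserves, so Banach's theorem gives a compact fixed point there. Any nonempty
bounded closed fixed point is at finite Hausdorff distance from it and hence equal to it.
-/

open Bornology Metric Set NNReal TopologicalSpace Function

-- `K ≠ 0` is needed: for `t = ∅` the left side is `⊤` while `0 * ⊤ = 0`.
theorem LipschitzWith.infEDist_image_le {α β : Type*} [PseudoEMetricSpace α]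
    [PseudoEMetricSpace β] {f : α → β} {K : ℝ≥0} (hf : LipschitzWith K f) (hK : K ≠ 0)
    (x : α) (t : Set α) : infEDist (f x) (f '' t) ≤ K * infEDist x t := by
  have hK₀ : (K : ENNReal) ≠ 0 := by exact_mod_cast hK
  rw [← ENNReal.div_le_iff' hK₀ ENNReal.coe_ne_top, le_infEDist]
  intro y hy
  rw [ENNReal.div_le_iff' hK₀ ENNReal.coe_ne_top]
  exact (infEDist_le_edist_of_mem (mem_image_of_mem f hy)).trans (hf x y)

theorem LipschitzWith.hausdorffEDist_image_le {α β : Type*} [PseudoEMetricSpace α]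
    [PseudoEMetricSpace β] {f : α → β} {K : ℝ≥0} (hf : LipschitzWith K f) (hK : K ≠ 0)
    (s t : Set α) : hausdorffEDist (f '' s) (f '' t) ≤ K * hausdorffEDist s t := by
  refine hausdorffEDist_le_of_infEDist ?_ ?_ <;> rintro _ ⟨x, hx, rfl⟩
  · exact (hf.infEDist_image_le hK x t).trans <|
      mul_le_mul_right (infEDist_le_hausdorffEDist_of_mem hx) _
  · rw [hausdorffEDist_comm]
    exact (hf.infEDist_image_le hK x s).trans <|
      mul_le_mul_right (infEDist_le_hausdorffEDist_of_mem hx) _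

namespace TopologicalSpace.Closeds

variable {ι α : Type*}

def hutchinson [TopologicalSpace α] (f : ι → α → α) (A : Closeds α) : Closeds α :=
  ⟨closure (⋃ i, f i '' A), isClosed_closure⟩

theorem contractingWith_hutchinson [EMetricSpace α] {f : ι → α → α} {K : ℝ≥0}
    (hf : ∀ i, LipschitzWith K (f i)) (hK₀ : K ≠ 0) (hK₁ : K < 1) :
    ContractingWith K (hutchinson f) := by
  refine ⟨hK₁, fun A B => ?_⟩
  simp only [edist_eq, hutchinson, coe_mk, hausdorffEDist_closure]
  exact hausdorffEDist_iUnion_le.trans <| iSup_le fun i => (hf i).hausdorffEDist_image_le hK₀ A B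

theorem hutchinson_toCloseds [TopologicalSpace α] [T2Space α] [Finite ι] [Nonempty ι]
    {f : ι → α → α} (hf : ∀ i, Continuous (f i)) (A : NonemptyCompacts α) :
    hutchinson f A.toCloseds = NonemptyCompacts.toCloseds
      ⟨⟨⋃ i, f i '' A, isCompact_iUnion fun i => A.isCompact.image (hf i)⟩,
        nonempty_iUnion.2 ⟨Classical.arbitrary ι, A.nonempty.image _⟩⟩ :=
  Closeds.ext <| (isCompact_iUnion fun i => A.isCompact.image (hf i)).isClosed.closure_eq

theorem exists_isFixedPt_hutchinson [MetricSpace α] [CompleteSpace α] [Nonempty α] [Finite ι]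
    [Nonempty ι] {f : ι → α → α} {K : ℝ≥0} (hf : ∀ i, LipschitzWith K (f i)) (hK₀ : K ≠ 0)
    (hK₁ : K < 1) : ∃ A : NonemptyCompacts α, IsFixedPt (hutchinson f) A.toCloseds := by
  have hF := contractingWith_hutchinson hf hK₀ hK₁
  have hF_compact (A : NonemptyCompacts α) := hutchinson_toCloseds (fun i => (hf i).continuous) A
  have hmaps : MapsTo (hutchinson f) (range NonemptyCompacts.toCloseds)
      (range NonemptyCompacts.toCloseds) := by
    rintro _ ⟨A, rfl⟩
    exact ⟨_, (hF_compact A).symm⟩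
  let x : NonemptyCompacts α := {Classical.arbitrary α}
  have hx : edist x.toCloseds (hutchinson f x.toCloseds) ≠ ⊤ := by
    rw [hF_compact, NonemptyCompacts.isometry_toCloseds.edist_eq]
    exact edist_ne_top _ _
  obtain ⟨_, ⟨A, rfl⟩, hA, -⟩ := ContractingWith.exists_fixedPoint'
    NonemptyCompacts.isClosedEmbedding_toCloseds.isClosed_range.isComplete hmaps
    (hF.restrict hmaps) (mem_range_self x) hx
  exact ⟨A, hA⟩

theorem eq_of_isFixedPt_hutchinson [MetricSpace α] {f : ι → α → α} {K : ℝ≥0}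
    (hf : ∀ i, LipschitzWith K (f i)) (hK₀ : K ≠ 0) (hK₁ : K < 1) {A B : Closeds α}
    (hA : IsFixedPt (hutchinson f) A) (hB : IsFixedPt (hutchinson f) B)
    (hA_ne : (A : Set α).Nonempty) (hA_bdd : IsBounded (A : Set α))
    (hB_ne : (B : Set α).Nonempty) (hB_bdd : IsBounded (B : Set α)) : A = B :=
  ((contractingWith_hutchinson hf hK₀ hK₁).eq_or_edist_eq_top_of_fixedPoints hA hB).resolve_right
    (hausdorffEDist_ne_top_of_nonempty_of_bounded hA_ne hB_ne hA_bdd hB_bdd)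

end TopologicalSpace.Closeds

/-- Hutchinson: for strict contractions S₀,…,S_{N-1} on a complete
metric space, the Hutchinson–Barnsley operator A ↦ cl(⋃ⱼ Sⱼ(A)) on nonempty
closed bounded subsets has a unique fixed point K, and K is compact. -/
theorem hutchinson_fixed_point {X : Type*} [MetricSpace X] [CompleteSpace X]
    [Nonempty X] {N : ℕ} (hN : 1 ≤ N) (S : Fin N → X → X)
    (γ : ℝ) (hγ0 : 0 < γ) (hγ1 : γ < 1)
    (hS : ∀ (j : Fin N) (x y : X), dist (S j x) (S j y) ≤ γ * dist x y) :
    ∃ K : Set X,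
      (K.Nonempty ∧ IsClosed K ∧ IsBounded K ∧
        closure (⋃ j : Fin N, S j '' K) = K ∧ IsCompact K) ∧
      ∀ K' : Set X, K'.Nonempty → IsClosed K' → IsBounded K' →
        closure (⋃ j : Fin N, S j '' K') = K' → K' = K := by
  have : Nonempty (Fin N) := ⟨⟨0, hN⟩⟩
  have hS_lip (j : Fin N) : LipschitzWith γ.toNNReal (S j) :=
    .of_dist_le_mul fun x y => by rw [Real.coe_toNNReal γ hγ0.le]; exact hS j x y
  have hγ0' : γ.toNNReal ≠ 0 := by simpa using hγ0
  have hγ1' : γ.toNNReal < 1 := by simpa using hγ1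
  obtain ⟨K, hK⟩ := Closeds.exists_isFixedPt_hutchinson hS_lip hγ0' hγ1'
  refine ⟨K, ⟨K.nonempty, K.isCompact.isClosed, K.isCompact.isBounded, congrArg SetLike.coe hK,
    K.isCompact⟩, fun K' hne hcl hbdd hfix => ?_⟩
  have hK' : (⟨K', hcl⟩ : Closeds X) = K.toCloseds :=
    Closeds.eq_of_isFixedPt_hutchinson hS_lip hγ0' hγ1' (Closeds.ext hfix) hK hne hbdd K.nonempty
      K.isCompact.isBounded
  exact congrArg SetLike.coe hK'
end

section
/- Under Assumptions 1 and 2, for every strategy w ∈ Σ the individual attractors satisfy the inclusion A_w ⊆ A_{σ(w)}, where σ is the shift map. -/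
open Bornology Filter Topology

/-- `wordComp S w` is the composition S_{w(n-1)} ∘ ⋯ ∘ S_{w(0)}. -/
def wordComp {X α : Type*} (S : α → X → X) : List α → X → X
  | [], x => x
  | a :: l, x => wordComp S l (S a x)

/-- The prefix w[n] = w(0)w(1)⋯w(n-1) of an infinite strategy w. -/
def prefixWord {α : Type*} (w : ℕ → α) (n : ℕ) : List α :=
  List.ofFn (fun i : Fin n => w i)

/-- The individual attractor A_w: the set of all limits lim S_{w[n_k]}(x_k)
with (x_k) a bounded sequence in X and n_k → ∞. -/
def indivAttr {X : Type*} [MetricSpace X] {N : ℕ} (S : Fin N → X → X)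
    (w : ℕ → Fin N) : Set X :=
  {y | ∃ (xk : ℕ → X) (nk : ℕ → ℕ), IsBounded (Set.range xk) ∧
    Tendsto nk atTop atTop ∧
    Tendsto (fun k => wordComp S (prefixWord w (nk k)) (xk k)) atTop (𝓝 y)}

/-! A point of A_w is a limit of S_{σ(w)[n_k - 1]}(S_{w(0)} x_k), and the starting points
S_{w(0)} x_k stay bounded. -/

lemma prefixWord_succ {α : Type*} (w : ℕ → α) (n : ℕ) :
    prefixWord w (n + 1) = w 0 :: prefixWord (fun k => w (k + 1)) n := by
  simp [prefixWord, List.ofFn_succ]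

lemma wordComp_prefixWord_of_pos {X α : Type*} (S : α → X → X) (w : ℕ → α) {n : ℕ}
    (hn : 0 < n) (x : X) :
    wordComp S (prefixWord w n) x =
      wordComp S (prefixWord (fun k => w (k + 1)) (n - 1)) (S (w 0) x) := by
  obtain ⟨m, rfl⟩ := Nat.exists_eq_add_of_lt hn
  rw [Nat.zero_add, prefixWord_succ, Nat.add_sub_cancel]
  rfl

theorem indivAttr_subset_shift_general {X : Type*} [MetricSpace X]
    {N : ℕ} (S : Fin N → X → X)
    (hbdd : ∀ (j : Fin N) (A : Set X), IsBounded A → IsBounded (S j '' A))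
    (w : ℕ → Fin N) :
    indivAttr S w ⊆ indivAttr S (fun k => w (k + 1)) := by
  rintro y ⟨xk, nk, hxb, hnk, hlim⟩
  refine ⟨S (w 0) ∘ xk, fun k => nk k - 1, ?_, (tendsto_sub_atTop_nat 1).comp hnk, ?_⟩
  · rw [Set.range_comp]
    exact hbdd (w 0) _ hxb
  · refine hlim.congr' ?_
    filter_upwards [hnk.eventually_ge_atTop 1] with k hk
    exact wordComp_prefixWord_of_pos S w hk (xk k)

/-- under Assumptions 1 and 2, A_w ⊆ A_{σ(w)}. -/
theorem indivAttr_subset_shift {X : Type*} [MetricSpace X] [CompleteSpace X]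
    {N : ℕ} (S : Fin N → X → X)
    (hcont : ∀ j, Continuous (S j))
    (hbdd : ∀ (j : Fin N) (A : Set X), IsBounded A → IsBounded (S j '' A))
    -- Assumption 1: a joint bounded absorbing set
    (Bstar : Set X) (hBsc : IsClosed Bstar) (hBsb : IsBounded Bstar)
    (habs : ∀ A : Set X, IsBounded A → ∃ m : ℕ, ∀ v : List (Fin N),
      m ≤ v.length → wordComp S v '' A ⊆ Bstar)
    -- Assumption 2: the Sⱼ are condensing w.r.t. a measure of noncompactness ψ
    (ψ : Set X → ℝ) (c : ℝ) (hc : 0 ≤ c)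
    (hnonneg : ∀ A : Set X, IsBounded A → 0 ≤ ψ A)
    (hzero : ∀ A : Set X, IsBounded A → (ψ A = 0 ↔ IsCompact (closure A)))
    (hmono : ∀ A B : Set X, IsBounded B → A ⊆ B → ψ A ≤ ψ B)
    (hunion : ∀ A B : Set X, IsBounded A → IsBounded B →
      ψ (A ∪ B) = max (ψ A) (ψ B))
    (hlip : ∀ A B : Set X, IsBounded A → IsBounded B →
      |ψ A - ψ B| ≤ c * Metric.hausdorffDist A B)
    (hcond : ∀ (j : Fin N) (A : Set X), IsBounded A →
      ψ (S j '' A) ≤ ψ A ∧ (0 < ψ A → ψ (S j '' A) < ψ A))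
    (w : ℕ → Fin N) :
    indivAttr S w ⊆ indivAttr S (fun k => w (k + 1)) :=
  indivAttr_subset_shift_general S hbdd w
end

section
/- Consider the discrete Ross–Macdonald map S(x,y) = (x + Δt(a·y·(1−x) − r·x), y + Δt(b·x·(1−y) − m·y)) with positive parameters a, b, r, m. If Δt < min{1/(a+r), 1/(b+m)}, then S maps the unit square [0,1]×[0,1] into itself. -/
/-- the discrete Ross–Macdonald map leaves the unit square
invariant when Δt < min{1/(a+r), 1/(b+m)}. -/
theorem rossMacdonald_maps_square (a b r m Δt : ℝ)
    (ha : 0 < a) (hb : 0 < b) (hr : 0 < r) (hm : 0 < m)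
    (hΔ : 0 < Δt) (hΔ' : Δt < min (1 / (a + r)) (1 / (b + m))) :
    ∀ x y : ℝ, x ∈ Set.Icc (0 : ℝ) 1 → y ∈ Set.Icc (0 : ℝ) 1 →
      x + Δt * (a * y * (1 - x) - r * x) ∈ Set.Icc (0 : ℝ) 1 ∧
      y + Δt * (b * x * (1 - y) - m * y) ∈ Set.Icc (0 : ℝ) 1 := by
  intro x y hx hy
  obtain ⟨hx0, hx1⟩ := hx
  obtain ⟨hy0, hy1⟩ := hy
  have h1 : Δt * (a + r) < 1 := by
    have := lt_of_lt_of_le hΔ' (min_le_left _ _)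
    have har : 0 < a + r := by linarith
    rw [lt_div_iff₀ har] at this
    linarith
  have h2 : Δt * (b + m) < 1 := by
    have := lt_of_lt_of_le hΔ' (min_le_right _ _)
    have hbm : 0 < b + m := by linarith
    rw [lt_div_iff₀ hbm] at this
    linarith
  refine ⟨⟨?_, ?_⟩, ⟨?_, ?_⟩⟩
  · have h3 : 0 ≤ 1 - Δt * r := by nlinarith
    nlinarith [mul_nonneg hΔ.le (mul_nonneg (mul_nonneg ha.le hy0) (by linarith : (0:ℝ) ≤ 1 - x)),
      mul_nonneg hx0 h3]
  · nlinarith [mul_nonneg hΔ.le (mul_nonneg hr.le hx0),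
      mul_nonneg (mul_nonneg hΔ.le ha.le) (mul_nonneg (by linarith : (0:ℝ) ≤ 1 - y) (by linarith : (0:ℝ) ≤ 1 - x))]
  · have h3 : 0 ≤ 1 - Δt * m := by nlinarith
    nlinarith [mul_nonneg hΔ.le (mul_nonneg (mul_nonneg hb.le hx0) (by linarith : (0:ℝ) ≤ 1 - y)),
      mul_nonneg hy0 h3]
  · nlinarith [mul_nonneg hΔ.le (mul_nonneg hm.le hy0),
      mul_nonneg (mul_nonneg hΔ.le hb.le) (mul_nonneg (by linarith : (0:ℝ) ≤ 1 - x) (by linarith : (0:ℝ) ≤ 1 - y))]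
end

section
/- For the discrete Ross–Macdonald map S(x,y) = (x + Δt(a·y(1−x) − r·x), y + Δt(b·x(1−y) − m·y)) with Δt > 0 and positive parameters satisfying ab > rm, the fixed points of S in [0,1]² are exactly (0,0) and (x*, y*) with x* = (ab − rm)/(b(a+r)) and y* = (ab − rm)/(a(b+m)). -/
/-!
A fixed point of the Euler step `p ↦ p + Δt • F p` with `Δt ≠ 0` is a zero of `F`. At a zero of
the Ross–Macdonald field, eliminating one coordinate between the two equations leaves
`x * (a * b - r * m - b * (a + r) * x) = 0` and `y * (a * b - r * m - a * (b + m) * y) = 0`, and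
either equation forces the other coordinate to vanish with the first; so a zero is either the
origin or the endemic point.
-/

/-- Equilibria of `ẋ = a y (1 - x) - r x`, `ẏ = b x (1 - y) - m y`. -/
def IsRossMacdonaldEquilibrium (a b r m x y : ℝ) : Prop :=
  a * y * (1 - x) - r * x = 0 ∧ b * x * (1 - y) - m * y = 0

lemma add_mul_eq_self_iff {Δt x f : ℝ} (hΔ : Δt ≠ 0) : x + Δt * f = x ↔ f = 0 := by
  rw [add_eq_left, mul_eq_zero, or_iff_right hΔ]

namespace IsRossMacdonaldEquilibrium

variable {a b r m x y : ℝ}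

lemma x_mul_eq_zero (h : IsRossMacdonaldEquilibrium a b r m x y) :
    x * (a * b - r * m - b * (a + r) * x) = 0 := by
  linear_combination a * (1 - x) * h.2 + (b * x + m) * h.1

lemma y_mul_eq_zero (h : IsRossMacdonaldEquilibrium a b r m x y) :
    y * (a * b - r * m - a * (b + m) * y) = 0 := by
  linear_combination b * (1 - y) * h.1 + (a * y + r) * h.2

lemma y_eq_zero_of_x_eq_zero (h : IsRossMacdonaldEquilibrium a b r m x y) (ha : a ≠ 0)
    (hx : x = 0) : y = 0 := by
  have hay : a * y = 0 := by simpa [hx] using h.1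
  exact (mul_eq_zero.mp hay).resolve_left ha

lemma x_eq_zero_of_y_eq_zero (h : IsRossMacdonaldEquilibrium a b r m x y) (hb : b ≠ 0)
    (hy : y = 0) : x = 0 := by
  have hbx : b * x = 0 := by simpa [hy] using h.2
  exact (mul_eq_zero.mp hbx).resolve_left hb

lemma eq_endemic_of_x_ne_zero (h : IsRossMacdonaldEquilibrium a b r m x y) (ha : a ≠ 0)
    (hb : b ≠ 0) (har : a + r ≠ 0) (hbm : b + m ≠ 0) (hx : x ≠ 0) :
    x = (a * b - r * m) / (b * (a + r)) ∧ y = (a * b - r * m) / (a * (b + m)) := by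
  have hy : y ≠ 0 := fun hy => hx (h.x_eq_zero_of_y_eq_zero hb hy)
  have hx' := (mul_eq_zero.mp h.x_mul_eq_zero).resolve_left hx
  have hy' := (mul_eq_zero.mp h.y_mul_eq_zero).resolve_left hy
  constructor
  · rw [eq_div_iff (mul_ne_zero hb har)]
    linarith
  · rw [eq_div_iff (mul_ne_zero ha hbm)]
    linarith

end IsRossMacdonaldEquilibrium

lemma isRossMacdonaldEquilibrium_endemic {a b r m : ℝ} (ha : a ≠ 0) (hb : b ≠ 0)
    (har : a + r ≠ 0) (hbm : b + m ≠ 0) :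
    IsRossMacdonaldEquilibrium a b r m
      ((a * b - r * m) / (b * (a + r))) ((a * b - r * m) / (a * (b + m))) := by
  constructor <;> field_simp <;> ring

lemma isRossMacdonaldEquilibrium_iff {a b r m x y : ℝ} (ha : a ≠ 0) (hb : b ≠ 0)
    (har : a + r ≠ 0) (hbm : b + m ≠ 0) :
    IsRossMacdonaldEquilibrium a b r m x y ↔
      (x = 0 ∧ y = 0) ∨
        (x = (a * b - r * m) / (b * (a + r)) ∧ y = (a * b - r * m) / (a * (b + m))) := by
  constructor
  · intro h
    by_cases hx : x = 0
    · exact .inl ⟨hx, h.y_eq_zero_of_x_eq_zero ha hx⟩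
    · exact .inr (h.eq_endemic_of_x_ne_zero ha hb har hbm hx)
  · rintro (⟨rfl, rfl⟩ | ⟨rfl, rfl⟩)
    · constructor <;> ring
    · exact isRossMacdonaldEquilibrium_endemic ha hb har hbm

theorem rossMacdonald_fixed_points_general (a b r m Δt : ℝ)
    (ha : 0 < a) (hb : 0 < b) (hr : 0 < r) (hm : 0 < m)
    (hΔ : 0 < Δt) :
    ∀ x y : ℝ, x ∈ Set.Icc (0 : ℝ) 1 → y ∈ Set.Icc (0 : ℝ) 1 →
      ((x + Δt * (a * y * (1 - x) - r * x) = x ∧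
        y + Δt * (b * x * (1 - y) - m * y) = y) ↔
       ((x = 0 ∧ y = 0) ∨
        (x = (a * b - r * m) / (b * (a + r)) ∧
         y = (a * b - r * m) / (a * (b + m))))) := by
  intro x y _ _
  rw [add_mul_eq_self_iff hΔ.ne', add_mul_eq_self_iff hΔ.ne']
  exact isRossMacdonaldEquilibrium_iff ha.ne' hb.ne' (by positivity) (by positivity)

/-- when ab > rm, the fixed points of the discrete
Ross–Macdonald map in the unit square are exactly (0,0) and
(x*, y*) = ((ab−rm)/(b(a+r)), (ab−rm)/(a(b+m))). -/
theorem rossMacdonald_fixed_points (a b r m Δt : ℝ)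
    (ha : 0 < a) (hb : 0 < b) (hr : 0 < r) (hm : 0 < m)
    (hΔ : 0 < Δt) (hab : r * m < a * b) :
    ∀ x y : ℝ, x ∈ Set.Icc (0 : ℝ) 1 → y ∈ Set.Icc (0 : ℝ) 1 →
      ((x + Δt * (a * y * (1 - x) - r * x) = x ∧
        y + Δt * (b * x * (1 - y) - m * y) = y) ↔
       ((x = 0 ∧ y = 0) ∨
        (x = (a * b - r * m) / (b * (a + r)) ∧
         y = (a * b - r * m) / (a * (b + m))))) :=
  rossMacdonald_fixed_points_general a b r m Δt ha hb hr hm hΔ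
end
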